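/- Every outcome returned by the PB Expanding Approvals Rule (PB-EAR) satisfies Inclusion PSC (IPSC). In particular, an IPSC outcome always exists for every PB instance with weak ordinal preferences. -/

import Mathlib

/-!
Let `N'` solidly support `C'`, and let `c ∈ C'` be unselected although it fits, together with
`P(N', C') ∩ W`, into the share `b(N')·L/n` of `N'`. While the rank counter is at most
`|C'| - 1`, every unit of weight that `N'` spends buys a candidate of `P(N', C')`, so `N'` keeps
at least the price `n·w(c)/L` of `c`. Hence the counter never passes `|C'| - 1` (there every
voter of `N'` approves `c`, which would put `c` into `C*`), and at termination the remaining
weight `n - n·w(W)/L` is at least `n·w(c)/L`, i.e. `c` would still fit into the budget.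
An outcome exists because PB-EAR terminates: each step selects a candidate or raises the rank
counter, and the counter is raised only below `|C|`, since at rank `|C|` every voter approves
every candidate and any affordable one lies in `C*`.
-/

open Finset
open scoped Classical

noncomputable section

/-- Each voter's weak preference relation `pref i` is a total preorder. -/
def TotalPreorder {V C : Type} (pref : V → C → C → Prop) : Prop :=
  (∀ i a b, pref i a b ∨ pref i b a) ∧
  (∀ i a b c, pref i a b → pref i b c → pref i a c)

/-- `nth i j` is voter `i`'s `(j+1)`-th most preferred candidate under a fixed
tie-breaking: an enumeration of all candidates consistent with `pref i`. -/
def TieBreak {V C : Type} [Fintype C] (pref : V → C → C → Prop) (nth : V → ℕ → C) : Prop :=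
  (∀ i c, ∃ j, j < Fintype.card C ∧ nth i j = c) ∧
  (∀ i j j', j ≤ j' → pref i (nth i j) (nth i j'))

/-- `N'` solidly supports `C'`: every voter in `N'` weakly prefers every member of `C'`
to every non-member. -/
def Solid {V C : Type} (pref : V → C → C → Prop) (N' : Finset V) (C' : Finset C) : Prop :=
  ∀ i ∈ N', ∀ c' ∈ C', ∀ c, c ∉ C' → pref i c' c

/-- `P(N',C') = {c : ∃ i ∈ N', c ≿_i c^{(i,|C'|)}}` where `c^{(i,j)} = nth i (j-1)`. -/
def Pset {V C : Type} [Fintype C] (pref : V → C → C → Prop) (nth : V → ℕ → C)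
    (N' : Finset V) (C' : Finset C) : Finset C :=
  Finset.univ.filter fun c => ∃ i ∈ N', pref i c (nth i (C'.card - 1))

/-- total cost of a set of candidates -/
def cost {C : Type} (w : C → ℝ) (S : Finset C) : ℝ := ∑ c ∈ S, w c

/-- Comparative PSC for PB with general (weak) preferences. -/
def CPSC {V C : Type} [Fintype V] [Fintype C] (pref : V → C → C → Prop) (nth : V → ℕ → C)
    (b : V → ℝ) (w : C → ℝ) (L : ℝ) (W : Finset C) : Prop :=
  ¬ ∃ (N' : Finset V) (C' : Finset C), Solid pref N' C' ∧
      cost w (Pset pref nth N' C' ∩ W) < (∑ i ∈ N', b i) * L / (Fintype.card V : ℝ) ∧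
      ∃ C'' ⊆ C', cost w (Pset pref nth N' C' ∩ W) < cost w C'' ∧
        cost w C'' ≤ (∑ i ∈ N', b i) * L / (Fintype.card V : ℝ)

/-- Inclusion PSC for PB with general (weak) preferences. -/
def IPSC {V C : Type} [Fintype V] [Fintype C] (pref : V → C → C → Prop) (nth : V → ℕ → C)
    (b : V → ℝ) (w : C → ℝ) (L : ℝ) (W : Finset C) : Prop :=
  ¬ ∃ (N' : Finset V) (C' : Finset C), Solid pref N' C' ∧
      cost w (Pset pref nth N' C' ∩ W) < (∑ i ∈ N', b i) * L / (Fintype.card V : ℝ) ∧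
      ∃ c ∈ C', c ∉ Pset pref nth N' C' ∩ W ∧
        cost w (insert c (Pset pref nth N' C' ∩ W)) ≤ (∑ i ∈ N', b i) * L / (Fintype.card V : ℝ)

/-- `W` is exhaustive w.r.t. budget limit `L`. -/
def Exhaustive {C : Type} (w : C → ℝ) (L : ℝ) (W : Finset C) : Prop :=
  cost w W ≤ L ∧ ∀ c, c ∉ W → L < cost w (insert c W)

/-- `W` is a maximal cost outcome w.r.t. budget limit `L`. -/
def MaximalCost {C : Type} (w : C → ℝ) (L : ℝ) (W : Finset C) : Prop :=
  cost w W ≤ L ∧ ∀ C' : Finset C, cost w C' ≤ L → cost w C' ≤ cost w W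

/-- dichotomous preferences with approval sets `A i` -/
def Dichotomous {V C : Type} (pref : V → C → C → Prop) (A : V → Finset C) : Prop :=
  ∀ i a c, pref i a c ↔ (a ∈ A i ∨ c ∉ A i)

/-- `⋃_{i ∈ N'} A i` -/
def unionA {V C : Type} [Fintype C] (A : V → Finset C) (N' : Finset V) : Finset C :=
  Finset.univ.filter fun c => ∃ i ∈ N', c ∈ A i

/-- `⋂_{i ∈ N'} A i` -/
def interA {V C : Type} [Fintype C] (A : V → Finset C) (N' : Finset V) : Finset C :=
  Finset.univ.filter fun c => ∀ i ∈ N', c ∈ A i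

/-- State of the PB Expanding Approvals Rule: selected candidates, current voter
weights, and the current rank counter (0-indexed: stage `j` uses each voter's
`j+1` most-preferred candidates). -/
structure EARState (V C : Type) where
  W : Finset C
  wt : V → ℝ
  j : ℕ

/-- At stage `j`, voter `i` approves `c` iff `c ≿_i c^{(i,j+1)}`. -/
def approves {V C : Type} (pref : V → C → C → Prop) (nth : V → ℕ → C)
    (i : V) (j : ℕ) (c : C) : Prop :=
  pref i c (nth i j)

/-- The set `C*` of unselected candidates whose supporter weight meets the
threshold `n·w(c)/L`. -/
def Cstar {V C : Type} [Fintype V] [Fintype C] (pref : V → C → C → Prop) (nth : V → ℕ → C)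
    (w : C → ℝ) (L : ℝ) (s : EARState V C) : Finset C :=
  Finset.univ.filter fun c => c ∉ s.W ∧
    (Fintype.card V : ℝ) * w c / L ≤
      ∑ i ∈ Finset.univ.filter (fun i => approves pref nth i s.j c), s.wt i

/-- One step of PB-EAR, performed only while some further candidate could still be
afforded: either increment the rank counter when `C*` is empty, or select some
`c* ∈ C*` and reduce the weights of its supporters by a total of `n·w(c*)/L`. -/
inductive EARStep {V C : Type} [Fintype V] [Fintype C] (pref : V → C → C → Prop)
    (nth : V → ℕ → C) (w : C → ℝ) (L : ℝ) : EARState V C → EARState V C → Prop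
  | incr (s : EARState V C)
      (hguard : ∃ c ∉ s.W, cost w (insert c s.W) ≤ L)
      (hempty : Cstar pref nth w L s = ∅) :
      EARStep pref nth w L s ⟨s.W, s.wt, s.j + 1⟩
  | select (s : EARState V C) (c : C)
      (hguard : ∃ c' ∉ s.W, cost w (insert c' s.W) ≤ L)
      (hc : c ∈ Cstar pref nth w L s) (wt' : V → ℝ)
      (hle : ∀ i, wt' i ≤ s.wt i) (hnn : ∀ i, 0 ≤ wt' i)
      (hout : ∀ i, ¬ approves pref nth i s.j c → wt' i = s.wt i)
      (htot : (∑ i, s.wt i) - (∑ i, wt' i) = (Fintype.card V : ℝ) * w c / L) :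
      EARStep pref nth w L s ⟨insert c s.W, wt', s.j⟩

section Cost

variable {C : Type} {w : C → ℝ}

lemma cost_insert {c : C} {S : Finset C} (hc : c ∉ S) : cost w (insert c S) = w c + cost w S :=
  Finset.sum_insert hc

lemma cost_nonneg (hw : ∀ c, 0 ≤ w c) (S : Finset C) : 0 ≤ cost w S :=
  Finset.sum_nonneg fun c _ => hw c

lemma cost_mono (hw : ∀ c, 0 ≤ w c) {S T : Finset C} (h : S ⊆ T) : cost w S ≤ cost w T :=
  Finset.sum_le_sum_of_subset_of_nonneg h fun c _ _ => hw c

lemma price_le_of_budget (hw : ∀ c, 0 ≤ w c) {n L x B : ℝ} (hn : 0 ≤ n) (hL : 0 ≤ L)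
    {P W W₀ : Finset C} {c : C} (hbudget : n * w c / L + n * cost w (P ∩ W₀) / L ≤ B)
    (hW : W ⊆ W₀) (hB : B ≤ x + n * cost w (P ∩ W) / L) : n * w c / L ≤ x := by
  have hcost : n * cost w (P ∩ W) / L ≤ n * cost w (P ∩ W₀) / L := by
    gcongr
    exact cost_mono hw (Finset.inter_subset_inter_left hW)
  linarith

end Cost

lemma exists_le_sum_sub_eq {ι : Type*} [Fintype ι] (A : Finset ι) {f : ι → ℝ}
    (hf : ∀ i, 0 ≤ f i) {τ : ℝ} (hτ : 0 ≤ τ) (hτA : τ ≤ ∑ i ∈ A, f i) :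
    ∃ g : ι → ℝ, (∀ i, g i ≤ f i) ∧ (∀ i, 0 ≤ g i) ∧ (∀ i ∉ A, g i = f i) ∧
      ∑ i, f i - ∑ i, g i = τ := by
  set S := ∑ i ∈ A, f i
  have hS : 0 ≤ S := hτ.trans hτA
  have hr : τ / S ≤ 1 := div_le_one_of_le₀ hτA hS
  have hr' : 0 ≤ τ / S := div_nonneg hτ hS
  refine ⟨fun i => if i ∈ A then f i * (1 - τ / S) else f i, fun i => ?_, fun i => ?_,
    fun i hi => if_neg hi, ?_⟩
  · dsimp only
    split_ifs
    · nlinarith [hf i]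
    · rfl
  · dsimp only
    split_ifs
    · exact mul_nonneg (hf i) (sub_nonneg.mpr hr)
    · exact hf i
  · calc ∑ i, f i - ∑ i, (if i ∈ A then f i * (1 - τ / S) else f i)
        = ∑ i, (if i ∈ A then f i * (τ / S) else 0) := by
          rw [← Finset.sum_sub_distrib]
          refine Finset.sum_congr rfl fun i _ => ?_
          split_ifs <;> ring
      _ = S * τ / S := by
          rw [Finset.sum_ite_mem, Finset.univ_inter, ← Finset.sum_mul, mul_div_assoc]
      _ = τ := mul_div_cancel_left_of_imp fun h => le_antisymm (h ▸ hτA) hτ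

section Preferences

variable {V C : Type} [Fintype C] {pref : V → C → C → Prop} {nth : V → ℕ → C}

lemma approves_mono (hpref : TotalPreorder pref) (hnth : TieBreak pref nth) {i : V} {j j' : ℕ}
    {c : C} (h : j ≤ j') (hc : approves pref nth i j c) : approves pref nth i j' c :=
  hpref.2 i c _ _ hc (hnth.2 i j j' h)

lemma approves_of_card_le (hnth : TieBreak pref nth) {i : V} {j : ℕ} (hj : Fintype.card C ≤ j)
    (c : C) : approves pref nth i j c := by
  obtain ⟨j', hj', rfl⟩ := hnth.1 i c
  exact hnth.2 i j' j (by omega)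

lemma TieBreak.injOn (hnth : TieBreak pref nth) (i : V) :
    Set.InjOn (nth i) (Finset.range (Fintype.card C)) := by
  apply Finset.injOn_of_card_image_eq
  rw [Finset.card_range, ← Finset.card_univ (α := C)]
  congr
  refine Finset.eq_univ_iff_forall.mpr fun c => ?_
  obtain ⟨j, hj, rfl⟩ := hnth.1 i c
  exact Finset.mem_image_of_mem _ (Finset.mem_range.mpr hj)

lemma Solid.approves (hpref : TotalPreorder pref) (hnth : TieBreak pref nth) {N' : Finset V}
    {C' : Finset C} (hsolid : Solid pref N' C') {i : V} (hi : i ∈ N') {c : C} (hc : c ∈ C') :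
    approves pref nth i (C'.card - 1) c := by
  by_cases hout : ∃ j < C'.card, nth i j ∉ C'
  · obtain ⟨j, hj, hjC'⟩ := hout
    exact hpref.2 i _ _ _ (hsolid i hi c hc _ hjC') (hnth.2 i j _ (by omega))
  -- otherwise the first `|C'|` choices of `i` all lie in `C'`, hence exhaust it
  push Not at hout
  have hinj : Set.InjOn (nth i) (Finset.range C'.card) :=
    (hnth.injOn i).mono (by simpa using C'.card_le_univ)
  have himage : (Finset.range C'.card).image (nth i) = C' := by
    refine Finset.eq_of_subset_of_card_le (fun x hx => ?_) ?_
    · obtain ⟨j, hj, rfl⟩ := Finset.mem_image.mp hx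
      exact hout j (Finset.mem_range.mp hj)
    · rw [Finset.card_image_of_injOn hinj, Finset.card_range]
  obtain ⟨j, hj, rfl⟩ := Finset.mem_image.mp (himage ▸ hc)
  exact hnth.2 i j _ (by simp at hj; omega)

lemma mem_Pset {N' : Finset V} {C' : Finset C} {c : C} {i : V} (hi : i ∈ N')
    (hc : approves pref nth i (C'.card - 1) c) : c ∈ Pset pref nth N' C' :=
  Finset.mem_filter.mpr ⟨Finset.mem_univ c, i, hi, hc⟩

end Preferences

section EAR

variable {V C : Type} [Fintype V] [Fintype C] {pref : V → C → C → Prop} {nth : V → ℕ → C}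
  {w : C → ℝ} {L : ℝ} {s t : EARState V C}

lemma mem_Cstar_of_le_sum {N' : Finset V} {c : C} (hcW : c ∉ s.W)
    (happ : ∀ i ∈ N', approves pref nth i s.j c) (hnn : ∀ i, 0 ≤ s.wt i)
    (hle : (Fintype.card V : ℝ) * w c / L ≤ ∑ i ∈ N', s.wt i) : c ∈ Cstar pref nth w L s := by
  refine Finset.mem_filter.mpr ⟨Finset.mem_univ c, hcW, hle.trans ?_⟩
  exact Finset.sum_le_sum_of_subset_of_nonneg (fun i hi => by simpa using happ i hi)
    fun i _ _ => hnn i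

lemma EARStep.W_subset (h : EARStep pref nth w L s t) : s.W ⊆ t.W := by
  cases h with
  | incr => exact subset_rfl
  | select => exact Finset.subset_insert _ _

lemma EARStep.wt_nonneg (h : EARStep pref nth w L s t) (hs : ∀ i, 0 ≤ s.wt i) :
    ∀ i, 0 ≤ t.wt i := by
  cases h with
  | incr => exact hs
  | select _ _ _ _ _ hnn => exact hnn

lemma EARStep.sum_wt_add_cost (h : EARStep pref nth w L s t) :
    ∑ i, t.wt i + Fintype.card V * cost w t.W / L =
      ∑ i, s.wt i + Fintype.card V * cost w s.W / L := by
  cases h with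
  | incr => rfl
  | select d _ hd _ _ _ _ htot =>
    have hdW : d ∉ s.W := (Finset.mem_filter.mp hd).2.1
    simp only [cost_insert hdW, mul_add, add_div]
    linarith

lemma EARStep.wt_nonneg_of_reflTransGen {b : V → ℝ} (hb : ∀ i, 0 ≤ b i)
    (h : Relation.ReflTransGen (EARStep pref nth w L) ⟨∅, b, 0⟩ t) : ∀ i, 0 ≤ t.wt i := by
  induction h with
  | refl => exact hb
  | tail _ hstep ih => exact hstep.wt_nonneg ih

lemma EARStep.sum_wt_add_cost_of_reflTransGen {b : V → ℝ}
    (h : Relation.ReflTransGen (EARStep pref nth w L) ⟨∅, b, 0⟩ t) :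
    ∑ i, t.wt i + Fintype.card V * cost w t.W / L = ∑ i, b i := by
  induction h with
  | refl => simp [cost]
  | tail _ hstep ih => exact hstep.sum_wt_add_cost.trans ih

lemma cost_le_of_reflTransGen [Nonempty V] (hL : 0 < L) {b : V → ℝ} (hb : ∀ i, 0 ≤ b i)
    (hbsum : ∑ i, b i = Fintype.card V)
    (h : Relation.ReflTransGen (EARStep pref nth w L) ⟨∅, b, 0⟩ t) : cost w t.W ≤ L := by
  have hn : (0 : ℝ) < Fintype.card V := Nat.cast_pos.mpr Fintype.card_pos
  have hsum := EARStep.sum_wt_add_cost_of_reflTransGen h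
  have hnn : 0 ≤ ∑ i, t.wt i :=
    Finset.sum_nonneg fun i _ => EARStep.wt_nonneg_of_reflTransGen hb h i
  have : Fintype.card V * cost w t.W / L ≤ Fintype.card V * L / L := by
    rw [mul_div_cancel_right₀ _ hL.ne']
    linarith
  exact le_of_mul_le_mul_left ((div_le_div_iff_of_pos_right hL).mp this) hn

/-- Weight lost by `N'` before rank `|C'|` is spent on candidates of `P(N', C')`. -/
lemma EARStep.sum_wt_add_cost_Pset_le (hpref : TotalPreorder pref) (hnth : TieBreak pref nth)
    {N' : Finset V} {C' : Finset C} (h : EARStep pref nth w L s t) (hj : s.j ≤ C'.card - 1) :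
    ∑ i ∈ N', s.wt i + Fintype.card V * cost w (Pset pref nth N' C' ∩ s.W) / L ≤
      ∑ i ∈ N', t.wt i + Fintype.card V * cost w (Pset pref nth N' C' ∩ t.W) / L := by
  cases h with
  | incr => rfl
  | select d _ hd wt' hle _ hout htot =>
    have hdW : d ∉ s.W := (Finset.mem_filter.mp hd).2.1
    by_cases hdP : d ∈ Pset pref nth N' C'
    · have hloss : ∑ i ∈ N', (s.wt i - wt' i) ≤ ∑ i, (s.wt i - wt' i) :=
        Finset.sum_le_sum_of_subset_of_nonneg (Finset.subset_univ N')
          fun i _ _ => sub_nonneg.mpr (hle i)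
      simp only [Finset.sum_sub_distrib] at hloss
      simp only [Finset.inter_insert_of_mem hdP,
        cost_insert fun h => hdW (Finset.mem_inter.mp h).2, mul_add, add_div]
      linarith
    · have hN' : ∀ i ∈ N', wt' i = s.wt i := fun i hi =>
        hout i fun hid => hdP (mem_Pset hi (approves_mono hpref hnth hj hid))
      rw [Finset.inter_insert_of_notMem hdP, Finset.sum_congr rfl hN']

/-- As long as `c` is unselected, the coalition `N'` keeps enough weight to afford it, so the
rank counter cannot move past `|C'| - 1`. -/
lemma j_le_and_sum_le_of_reflTransGen (hpref : TotalPreorder pref) (hnth : TieBreak pref nth)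
    (hw : ∀ c, 0 ≤ w c) (hL : 0 ≤ L) {b : V → ℝ} (hb : ∀ i, 0 ≤ b i) {N' : Finset V}
    {C' W₀ : Finset C} {c : C} (hc : ∀ i ∈ N', approves pref nth i (C'.card - 1) c)
    (hcW₀ : c ∉ W₀)
    (hbudget : Fintype.card V * w c / L +
      Fintype.card V * cost w (Pset pref nth N' C' ∩ W₀) / L ≤ ∑ i ∈ N', b i)
    (hrun : Relation.ReflTransGen (EARStep pref nth w L) ⟨∅, b, 0⟩ t) (htW : t.W ⊆ W₀) :
    t.j ≤ C'.card - 1 ∧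
      ∑ i ∈ N', b i ≤
        ∑ i ∈ N', t.wt i + Fintype.card V * cost w (Pset pref nth N' C' ∩ t.W) / L := by
  induction hrun with
  | refl => simp [cost]
  | @tail u t hrun hstep ih =>
    obtain ⟨hj, hB⟩ := ih (hstep.W_subset.trans htW)
    refine ⟨?_, hB.trans (hstep.sum_wt_add_cost_Pset_le hpref hnth hj)⟩
    cases hstep with
    | select => exact hj
    | incr _ hempty =>
      refine Nat.lt_of_le_of_ne hj fun hjk => ?_
      have hnn := EARStep.wt_nonneg_of_reflTransGen hb hrun
      have hcu : c ∈ Cstar pref nth w L u :=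
        mem_Cstar_of_le_sum (fun h => hcW₀ (htW h)) (fun i hi => hjk ▸ hc i hi) hnn
          (price_le_of_budget hw (Nat.cast_nonneg _) hL hbudget htW hB)
      simp [hempty] at hcu

theorem ipsc_of_terminal [Nonempty V] (hpref : TotalPreorder pref) (hnth : TieBreak pref nth)
    {b : V → ℝ} (hb : ∀ i, 0 ≤ b i) (hbsum : ∑ i, b i = Fintype.card V) (hw : ∀ c, 0 ≤ w c)
    (hL : 0 < L) (hrun : Relation.ReflTransGen (EARStep pref nth w L) ⟨∅, b, 0⟩ s)
    (hterm : ¬ ∃ c ∉ s.W, cost w (insert c s.W) ≤ L) : IPSC pref nth b w L s.W := by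
  rintro ⟨N', C', hsolid, hlt, c, hcC', hcPW, hcost⟩
  set n : ℝ := (Fintype.card V : ℝ)
  set P := Pset pref nth N' C'
  have hn : 0 < n := Nat.cast_pos.mpr Fintype.card_pos
  obtain ⟨i₀, hi₀⟩ : N'.Nonempty := by
    rw [Finset.nonempty_iff_ne_empty]
    rintro rfl
    simp only [Finset.sum_empty, zero_mul, zero_div] at hlt
    exact (cost_nonneg hw _).not_gt hlt
  have hc : ∀ i ∈ N', approves pref nth i (C'.card - 1) c :=
    fun i hi => hsolid.approves hpref hnth hi hcC'
  have hcW : c ∉ s.W := fun h => hcPW (Finset.mem_inter.mpr ⟨mem_Pset hi₀ (hc i₀ hi₀), h⟩)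
  have hbudget : n * w c / L + n * cost w (P ∩ s.W) / L ≤ ∑ i ∈ N', b i := by
    rw [cost_insert hcPW, le_div_iff₀ hn] at hcost
    rw [← add_div, div_le_iff₀ hL]
    linarith
  have hretained : n * w c / L ≤ ∑ i ∈ N', s.wt i :=
    price_le_of_budget hw hn.le hL.le hbudget subset_rfl
      (j_le_and_sum_le_of_reflTransGen hpref hnth hw hL.le hb hc hcW hbudget hrun subset_rfl).2
  have hN' : ∑ i ∈ N', s.wt i ≤ ∑ i, s.wt i :=
    Finset.sum_le_univ_sum_of_nonneg (EARStep.wt_nonneg_of_reflTransGen hb hrun)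
  have hsum := EARStep.sum_wt_add_cost_of_reflTransGen hrun
  have hover : n * L / L < n * (w c + cost w s.W) / L := by
    push Not at hterm
    have := hterm c hcW
    rw [cost_insert hcW] at this
    gcongr
  rw [mul_div_cancel_right₀ _ hL.ne', mul_add, add_div] at hover
  linarith

def EARState.progress (x : EARState V C) : ℕ ×ₗ ℕ :=
  toLex (Fintype.card C - x.W.card, Fintype.card C - x.j)

lemma EARStep.exists_progress (hnth : TieBreak pref nth) (hw : ∀ c, 0 ≤ w c) (hL : 0 < L)
    (hnn : ∀ i, 0 ≤ s.wt i)
    (hsum : ∑ i, s.wt i + Fintype.card V * cost w s.W / L = Fintype.card V)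
    {c : C} (hcW : c ∉ s.W) (hcL : cost w (insert c s.W) ≤ L) :
    ∃ t, EARStep pref nth w L s t ∧ t.progress < s.progress := by
  have hprice : Fintype.card V * w c / L ≤ ∑ i, s.wt i := by
    rw [cost_insert hcW] at hcL
    have : Fintype.card V * (w c + cost w s.W) / L ≤ Fintype.card V * L / L := by gcongr
    rw [mul_div_cancel_right₀ _ hL.ne', mul_add, add_div] at this
    linarith
  rcases (Cstar pref nth w L s).eq_empty_or_nonempty with hempty | ⟨d, hd⟩
  · have hj : s.j < Fintype.card C := by
      by_contra! hj
      have := mem_Cstar_of_le_sum (N' := Finset.univ) hcW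
        (fun i _ => approves_of_card_le hnth hj c) hnn hprice
      simp [hempty] at this
    refine ⟨_, .incr s ⟨c, hcW, hcL⟩ hempty, Prod.Lex.toLex_lt_toLex.mpr (.inr ⟨rfl, ?_⟩)⟩
    dsimp only
    omega
  · obtain ⟨-, hdW, hdprice⟩ := Finset.mem_filter.mp hd
    obtain ⟨wt', hle, hnn', hout, htot⟩ := exists_le_sum_sub_eq _ hnn
      (div_nonneg (mul_nonneg (Nat.cast_nonneg _) (hw d)) hL.le) hdprice
    refine ⟨_, .select s d ⟨c, hcW, hcL⟩ hd wt' hle hnn' (fun i hi => hout i (by simpa using hi))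
      htot, Prod.Lex.toLex_lt_toLex.mpr (.inl ?_)⟩
    have := Finset.card_lt_univ_of_notMem hdW
    dsimp only
    rw [Finset.card_insert_of_notMem hdW]
    omega

lemma exists_terminal_of_reflTransGen [Nonempty V] (hnth : TieBreak pref nth)
    (hw : ∀ c, 0 ≤ w c) (hL : 0 < L) {b : V → ℝ} (hb : ∀ i, 0 ≤ b i)
    (hbsum : ∑ i, b i = Fintype.card V) :
    ∃ t, Relation.ReflTransGen (EARStep pref nth w L) ⟨∅, b, 0⟩ t ∧
      ¬ ∃ c ∉ t.W, cost w (insert c t.W) ≤ L := by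
  suffices ∀ s, Relation.ReflTransGen (EARStep pref nth w L) ⟨∅, b, 0⟩ s →
      ∃ t, Relation.ReflTransGen (EARStep pref nth w L) ⟨∅, b, 0⟩ t ∧
        ¬ ∃ c ∉ t.W, cost w (insert c t.W) ≤ L from this _ .refl
  intro s hrun
  induction hp : s.progress using WellFoundedLT.induction generalizing s with | ind p ih
  by_cases hterm : ∃ c ∉ s.W, cost w (insert c s.W) ≤ L
  · obtain ⟨c, hcW, hcL⟩ := hterm
    obtain ⟨t, hst, hlt⟩ := EARStep.exists_progress hnth hw hL
      (EARStep.wt_nonneg_of_reflTransGen hb hrun)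
      ((EARStep.sum_wt_add_cost_of_reflTransGen hrun).trans hbsum) hcW hcL
    exact ih _ (hp ▸ hlt) t (hrun.tail hst) rfl
  · exact ⟨s, hrun, hterm⟩

end EAR

/-- every outcome returned by PB-EAR (a terminal state reachable from
the initial state) satisfies IPSC; in particular an IPSC outcome always exists. -/
theorem pbear_satisfies_ipsc {V C : Type} [Fintype V] [Fintype C] [Nonempty V]
    (pref : V → C → C → Prop) (nth : V → ℕ → C) (b : V → ℝ) (w : C → ℝ) (L : ℝ)
    (hpref : TotalPreorder pref) (hnth : TieBreak pref nth)
    (hb : ∀ i, 0 < b i) (hbsum : (∑ i, b i) = (Fintype.card V : ℝ))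
    (hw : ∀ c, 0 < w c) (hL : 0 < L) :
    (∀ s : EARState V C,
        Relation.ReflTransGen (EARStep pref nth w L) ⟨∅, b, 0⟩ s →
        (¬ ∃ c ∉ s.W, cost w (insert c s.W) ≤ L) →
        IPSC pref nth b w L s.W) ∧
    ∃ W : Finset C, cost w W ≤ L ∧ IPSC pref nth b w L W := by
  have hb' : ∀ i, 0 ≤ b i := fun i => (hb i).le
  have hw' : ∀ c, 0 ≤ w c := fun c => (hw c).le
  obtain ⟨s, hrun, hterm⟩ := exists_terminal_of_reflTransGen hnth hw' hL hb' hbsum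
  exact ⟨fun s hrun hterm => ipsc_of_terminal hpref hnth hb' hbsum hw' hL hrun hterm,
    s.W, cost_le_of_reflTransGen hL hb' hbsum hrun,
    ipsc_of_terminal hpref hnth hb' hbsum hw' hL hrun hterm⟩
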